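/- arXiv:2501.07413 — 10 statements merged into one kernel-verified Lean document; each statement's English description precedes it below -/
import Mathlib

section
/- Let n ≥ 3 and d ≥ 0, and let G be a graph obtained from the complete graph K_n by 2-stretching d distinct vertices (each stretching replacing a vertex u by a path-hub gadget u₀, u₁, u₂ as in the definition of 2-stretching). Then the independence number of G equals d + 1. -/
open SimpleGraph

/-- Vertices of a stretched clique obtained from `K_n` by 2-stretching the vertices in `D`:
`Sum.inl j` is the unstretched vertex `j ∉ D`, `Sum.inr (Sum.inl i)` is the hub vertex `i₀`
of a stretched index `i ∈ D`, and `Sum.inr (Sum.inr (i, ℓ))` is the wing vertex `i_{ℓ+1}`. -/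
abbrev KVert (n : ℕ) (D : Finset (Fin n)) :=
  {j : Fin n // j ∉ D} ⊕ ({i : Fin n // i ∈ D} ⊕ ({i : Fin n // i ∈ D} × Fin 2))

/-- Adjacency data of a stretched clique: unstretched vertices are pairwise adjacent,
each hub is adjacent exactly to its two wings, `W i ℓ j` records an edge between wing `i_{ℓ+1}`
and unstretched vertex `j`, and `X i ℓ i' ℓ'` records an edge between wings of distinct
stretched indices. -/
def KRel (n : ℕ) (D : Finset (Fin n))
    (W : {i : Fin n // i ∈ D} → Fin 2 → {j : Fin n // j ∉ D} → Prop)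
    (X : {i : Fin n // i ∈ D} → Fin 2 → {i : Fin n // i ∈ D} → Fin 2 → Prop) :
    KVert n D → KVert n D → Prop
  | Sum.inl _, Sum.inl _ => True
  | Sum.inr (Sum.inl i), Sum.inr (Sum.inr (i', _)) => i = i'
  | Sum.inr (Sum.inr (i, l)), Sum.inl j => W i l j
  | Sum.inr (Sum.inr (i, l)), Sum.inr (Sum.inr (i', l')) => i ≠ i' ∧ X i l i' l'
  | _, _ => False

/-- The stretched clique determined by the data `D, W, X`. -/
def KGraph (n : ℕ) (D : Finset (Fin n))
    (W : {i : Fin n // i ∈ D} → Fin 2 → {j : Fin n // j ∉ D} → Prop)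
    (X : {i : Fin n // i ∈ D} → Fin 2 → {i : Fin n // i ∈ D} → Fin 2 → Prop) :
    SimpleGraph (KVert n D) :=
  SimpleGraph.fromRel (KRel n D W X)

/-- The covering conditions coming from `A₁ ∪ A₂ = Γ(v)` in each 2-stretching:
every unstretched vertex is adjacent to some wing of every stretched index, and between
the wings of any two distinct stretched indices there is at least one edge. -/
def KCover (n : ℕ) (D : Finset (Fin n))
    (W : {i : Fin n // i ∈ D} → Fin 2 → {j : Fin n // j ∉ D} → Prop)
    (X : {i : Fin n // i ∈ D} → Fin 2 → {i : Fin n // i ∈ D} → Fin 2 → Prop) : Prop :=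
  (∀ i j, W i 0 j ∨ W i 1 j) ∧
  (∀ i i', i ≠ i' → ∃ l l', X i l i' l' ∨ X i' l' i l)

/-- Membership in the class `𝒦_{n,d}`: a graph obtained from `K_n` by
2-stretching `d` of its `n` vertices, up to isomorphism. -/
def InK (n d : ℕ) {V : Type*} (G : SimpleGraph V) : Prop :=
  ∃ (D : Finset (Fin n))
    (W : {i : Fin n // i ∈ D} → Fin 2 → {j : Fin n // j ∉ D} → Prop)
    (X : {i : Fin n // i ∈ D} → Fin 2 → {i : Fin n // i ∈ D} → Fin 2 → Prop),
      D.card = d ∧ KCover n D W X ∧ Nonempty (G ≃g KGraph n D W X)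

/-- The independence (stability) number of a graph. -/
noncomputable def indepNum {W : Type*} [Fintype W] (G : SimpleGraph W) : ℕ :=
  sSup {n | ∃ s : Finset W, ((↑s : Set W).Pairwise fun u w => ¬ G.Adj u w) ∧ s.card = n}

/-!
An independent set meets the clique of unstretched vertices at most once, and the gadget
`{i₀, i₁, i₂}` of a stretched vertex `i` at most once unless it contains both wings `i₁, i₂`.
Since `A₁ ∪ A₂ = Γ(i)`, every unstretched vertex sees a wing of `i`, and any two gadgets are
joined by an edge between wings; so at most one gadget contributes two vertices, and then no
unstretched vertex is taken. This gives at most `d + 1` vertices. Conversely, both wings of one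
gadget together with the hubs of all the others (or a single vertex when `d = 0`) form an
independent set of size `d + 1`.
-/

open Finset

namespace SimpleGraph

variable {V V' : Type*} {G : SimpleGraph V} {G' : SimpleGraph V'}

lemma IsIndepSet.not_adj {s : Set V} (hs : G.IsIndepSet s) {u w : V} (hu : u ∈ s) (hw : w ∈ s) :
    ¬ G.Adj u w :=
  fun h => hs hu hw h.ne h

lemma IsIndepSet.image_iso {s : Set V} (hs : G.IsIndepSet s) (e : G ≃g G') :
    G'.IsIndepSet (e '' s) := by
  rintro _ ⟨u, hu, rfl⟩ _ ⟨w, hw, rfl⟩ - h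
  exact hs.not_adj hu hw (e.map_adj_iff.1 h)

lemma Iso.indepNum_le [Finite V'] (e : G ≃g G') : G.indepNum ≤ G'.indepNum := by
  obtain ⟨s, hs⟩ := G.exists_isNIndepSet_indepNum
  rw [← hs.card_eq, ← card_map e.toEquiv.toEmbedding]
  apply IsIndepSet.card_le_indepNum
  rw [coe_map]
  exact hs.isIndepSet.image_iso e

lemma Iso.indepNum_eq [Finite V] [Finite V'] (e : G ≃g G') : G.indepNum = G'.indepNum :=
  le_antisymm e.indepNum_le e.symm.indepNum_le

end SimpleGraph

lemma indepNum_eq_indepNum {V : Type*} [Fintype V] (G : SimpleGraph V) :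
    _root_.indepNum G = G.indepNum := by
  simp only [_root_.indepNum, SimpleGraph.indepNum, SimpleGraph.isNIndepSet_iff]

section KGraph

variable {n : ℕ} {D : Finset (Fin n)}
  {W : {i : Fin n // i ∈ D} → Fin 2 → {j : Fin n // j ∉ D} → Prop}
  {X : {i : Fin n // i ∈ D} → Fin 2 → {i : Fin n // i ∈ D} → Fin 2 → Prop}

lemma kGraph_adj {u w : KVert n D} :
    (KGraph n D W X).Adj u w ↔ u ≠ w ∧ (KRel n D W X u w ∨ KRel n D W X w u) :=
  SimpleGraph.fromRel_adj _ _ _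

lemma kGraph_adj_inl_inl {j j' : {j : Fin n // j ∉ D}} (h : j ≠ j') :
    (KGraph n D W X).Adj (.inl j) (.inl j') := by
  simp [kGraph_adj, KRel, h]

lemma kGraph_adj_hub_wing (i : {i : Fin n // i ∈ D}) (l : Fin 2) :
    (KGraph n D W X).Adj (.inr (.inl i)) (.inr (.inr (i, l))) := by
  simp [kGraph_adj, KRel]

lemma kGraph_adj_wing_inl {i : {i : Fin n // i ∈ D}} {l : Fin 2} {j : {j : Fin n // j ∉ D}}
    (h : W i l j) : (KGraph n D W X).Adj (.inr (.inr (i, l))) (.inl j) := by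
  simp [kGraph_adj, KRel, h]

lemma kGraph_adj_wing_wing {i i' : {i : Fin n // i ∈ D}} {l l' : Fin 2} (h : i ≠ i')
    (hx : X i l i' l' ∨ X i' l' i l) :
    (KGraph n D W X).Adj (.inr (.inr (i, l))) (.inr (.inr (i', l'))) := by
  simp [kGraph_adj, KRel, h, Ne.symm h, hx]

namespace SimpleGraph.IsIndepSet

variable {s : Set (KVert n D)}

lemma inl_eq (hs : (KGraph n D W X).IsIndepSet s) {j j' : {j : Fin n // j ∉ D}}
    (hj : .inl j ∈ s) (hj' : .inl j' ∈ s) : j = j' := by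
  by_contra h
  exact hs.not_adj hj hj' (kGraph_adj_inl_inl h)

lemma hub_notMem (hs : (KGraph n D W X).IsIndepSet s) {i : {i : Fin n // i ∈ D}} {l : Fin 2}
    (hl : .inr (.inr (i, l)) ∈ s) : .inr (.inl i) ∉ s :=
  fun hi => hs.not_adj hi hl (kGraph_adj_hub_wing i l)

lemma inl_notMem (hs : (KGraph n D W X).IsIndepSet s) (hC : KCover n D W X)
    {i : {i : Fin n // i ∈ D}} (hi : ∀ l, .inr (.inr (i, l)) ∈ s) (j : {j : Fin n // j ∉ D}) :
    .inl j ∉ s := by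
  intro hj
  obtain ⟨l, hl⟩ : ∃ l, W i l j := (hC.1 i j).elim (⟨0, ·⟩) (⟨1, ·⟩)
  exact hs.not_adj (hi l) hj (kGraph_adj_wing_inl hl)

lemma eq_of_wings_mem (hs : (KGraph n D W X).IsIndepSet s) (hC : KCover n D W X)
    {i i' : {i : Fin n // i ∈ D}} (hi : ∀ l, .inr (.inr (i, l)) ∈ s)
    (hi' : ∀ l, .inr (.inr (i', l)) ∈ s) : i = i' := by
  by_contra h
  obtain ⟨l, l', hx⟩ := hC.2 i i' h
  exact hs.not_adj (hi l) (hi' l') (kGraph_adj_wing_wing h hx)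

end SimpleGraph.IsIndepSet

/-- Injective on every independent set `s` (`injOn_slot`): the second wing of a gadget whose two
wings both lie in `s` takes the slot `none` of the unstretched vertices, which `s` then avoids. -/
def slot (s : Set (KVert n D)) [DecidablePred (· ∈ s)] :
    KVert n D → Option {i : Fin n // i ∈ D}
  | .inl _ => none
  | .inr (.inl i) => some i
  | .inr (.inr (i, l)) => if l = 1 ∧ .inr (.inr (i, 0)) ∈ s then none else some i

lemma injOn_slot (hC : KCover n D W X) {s : Set (KVert n D)} [DecidablePred (· ∈ s)]
    (hs : (KGraph n D W X).IsIndepSet s) : s.InjOn (slot s) := by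
  have wings_mem {i : {i : Fin n // i ∈ D}} {l : Fin 2} (h : l = 1 ∧ .inr (.inr (i, 0)) ∈ s)
      (hl : .inr (.inr (i, l)) ∈ s) : ∀ l, .inr (.inr (i, l)) ∈ s :=
    Fin.forall_fin_two.2 ⟨h.2, h.1 ▸ hl⟩
  rintro (j | i | ⟨i, l⟩) ha (j' | i' | ⟨i', l'⟩) hb hab <;>
    simp only [slot, reduceCtorEq, Option.some.injEq] at hab
  · rw [hs.inl_eq ha hb]
  · split_ifs at hab with h
    exact absurd ha (hs.inl_notMem hC (wings_mem h hb) j)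
  · rw [hab]
  · split_ifs at hab with h
    cases hab
    exact absurd ha (hs.hub_notMem hb)
  · split_ifs at hab with h
    exact absurd hb (hs.inl_notMem hC (wings_mem h ha) j')
  · split_ifs at hab with h
    cases hab
    exact absurd hb (hs.hub_notMem ha)
  · split_ifs at hab with h h' h'
    · obtain rfl := hs.eq_of_wings_mem hC (wings_mem h ha) (wings_mem h' hb)
      rw [h.1, h'.1]
    · cases hab
      fin_cases l <;> fin_cases l' <;> simp_all

lemma card_le_of_isIndepSet_kGraph (hC : KCover n D W X) {s : Finset (KVert n D)}
    (hs : (KGraph n D W X).IsIndepSet ↑s) : #s ≤ #D + 1 := by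
  classical
  calc #s ≤ #(univ : Finset (Option {i : Fin n // i ∈ D})) :=
        card_le_card_of_injOn (slot ↑s) (fun _ _ => mem_univ _) (injOn_slot hC hs)
    _ = #D + 1 := by simp

lemma exists_isNIndepSet_kGraph (hn : 0 < n) : ∃ s, (KGraph n D W X).IsNIndepSet (#D + 1) s := by
  rcases D.eq_empty_or_nonempty with rfl | ⟨i₀, hi₀⟩
  · exact ⟨{.inl ⟨⟨0, hn⟩, notMem_empty _⟩}, by simp [isNIndepSet_iff]⟩
  let i : {i : Fin n // i ∈ D} := ⟨i₀, hi₀⟩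
  refine ⟨insert (.inr (.inr (i, 0))) (insert (.inr (.inr (i, 1)))
    ((univ.erase i).image (.inr ∘ .inl))), ?_, ?_⟩
  · rintro u hu w hw -
    simp only [coe_insert, coe_image, coe_erase, coe_univ, Set.mem_insert_iff,
      Set.mem_image, Set.mem_sdiff, Set.mem_singleton_iff] at hu hw
    rcases hu with rfl | rfl | ⟨i', hi', rfl⟩ <;>
      rcases hw with rfl | rfl | ⟨i'', hi'', rfl⟩ <;> simp_all [kGraph_adj, KRel]
  · have hD : 0 < #D := card_pos.2 ⟨i₀, hi₀⟩
    rw [card_insert_of_notMem (by simp), card_insert_of_notMem (by simp),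
      card_image_of_injective _ (Sum.inr_injective.comp Sum.inl_injective),
      card_erase_of_mem (mem_univ _), card_univ, Fintype.card_coe]
    omega

lemma indepNum_kGraph (hn : 0 < n) (hC : KCover n D W X) :
    (KGraph n D W X).indepNum = #D + 1 := by
  obtain ⟨s, hs⟩ := exists_isNIndepSet_kGraph (W := W) (X := X) hn
  refine le_antisymm ?_ (hs.card_eq ▸ hs.isIndepSet.card_le_indepNum)
  obtain ⟨t, ht⟩ := (KGraph n D W X).exists_isNIndepSet_indepNum
  exact ht.card_eq ▸ card_le_of_isIndepSet_kGraph hC ht.isIndepSet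

end KGraph

/-- Any graph obtained from `K_n` (`n ≥ 3`) by 2-stretching `d` of its vertices has
independence number exactly `d + 1`. -/
theorem indepNum_of_inK {V : Type*} [Fintype V] (n d : ℕ) (hn : 3 ≤ n)
    (G : SimpleGraph V) (hG : InK n d G) :
    _root_.indepNum G = d + 1 := by
  obtain ⟨D, W, X, rfl, hC, ⟨e⟩⟩ := hG
  rw [indepNum_eq_indepNum, e.indepNum_eq, indepNum_kGraph (by omega) hC]
end

section
/- Let G ∈ 𝒦_{n,d} be a graph obtained from K_n by 2-stretching d vertices, and suppose the clique number of G is at most n − d. Then for every stretched index i and every wing vertex i_ℓ (ℓ ∈ {1,2}), there exists an unstretched vertex j such that i_ℓ is not adjacent to j; in particular G belongs to the subclass 𝒦̃_{n,d}. -/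
open SimpleGraph

/-- The index of `K_n` with which a vertex of a stretched clique is associated. -/
def idxOf {n : ℕ} {D : Finset (Fin n)} : KVert n D → Fin n :=
  Sum.elim (fun j => j.val) (Sum.elim (fun i => i.val) (fun p => p.1.val))

/-- If a stretched clique `G ∈ 𝒦_{n,d}` has clique number at most `n - d`, then every wing
vertex `i_ℓ` fails to be adjacent to some unstretched vertex `j`; in particular
`Γ̃_G(i_ℓ) ⊊ [n] \ {i}` for every wing, i.e. `G ∈ 𝒦̃_{n,d}`. -/
theorem wing_misses_unstretched (n d : ℕ) (hn : 3 ≤ n) (D : Finset (Fin n))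
    (W : {i : Fin n // i ∈ D} → Fin 2 → {j : Fin n // j ∉ D} → Prop)
    (X : {i : Fin n // i ∈ D} → Fin 2 → {i : Fin n // i ∈ D} → Fin 2 → Prop)
    (hd : D.card = d) (hcov : KCover n D W X)
    (hω : ∀ s : Finset (KVert n D), (KGraph n D W X).IsClique ↑s → s.card ≤ n - d) :
    ∀ (i : {i : Fin n // i ∈ D}) (l : Fin 2),
      (∃ j : {j : Fin n // j ∉ D},
        ¬ (KGraph n D W X).Adj (Sum.inr (Sum.inr (i, l))) (Sum.inl j)) ∧
      (∃ m : Fin n, m ≠ i.val ∧ ∀ w : KVert n D, idxOf w = m →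
        ¬ (KGraph n D W X).Adj (Sum.inr (Sum.inr (i, l))) w) := by
  intro i l
  have key : ∃ j : {j : Fin n // j ∉ D},
      ¬ (KGraph n D W X).Adj (Sum.inr (Sum.inr (i, l))) (Sum.inl j) := by
    by_contra h
    push_neg at h
    set s : Finset (KVert n D) :=
      insert (Sum.inr (Sum.inr (i, l)))
        (Finset.univ.image (Sum.inl : {j : Fin n // j ∉ D} → KVert n D)) with hs
    have hclique : (KGraph n D W X).IsClique ↑s := by
      intro a ha b hb hab
      simp only [hs, Finset.coe_insert, Set.mem_insert_iff, Finset.coe_image,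
        Finset.coe_univ, Set.image_univ, Set.mem_range] at ha hb
      rcases ha with rfl | ⟨ja, rfl⟩
      · rcases hb with rfl | ⟨jb, rfl⟩
        · exact absurd rfl hab
        · exact h jb
      · rcases hb with rfl | ⟨jb, rfl⟩
        · exact (h ja).symm
        · exact ⟨hab, Or.inl trivial⟩
    have hmem : (Sum.inr (Sum.inr (i, l)) : KVert n D) ∉
        Finset.univ.image (Sum.inl : {j : Fin n // j ∉ D} → KVert n D) := by
      simp
    have hcard : s.card = (n - d) + 1 := by
      rw [hs, Finset.card_insert_of_notMem hmem,
        Finset.card_image_of_injective _ Sum.inl_injective, Finset.card_univ,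
        Fintype.card_subtype_compl, Fintype.card_fin]
      simp [Fintype.card_coe, hd]
    have := hω s hclique
    omega
  obtain ⟨j, hj⟩ := key
  refine ⟨⟨j, hj⟩, j.val, ?_, ?_⟩
  · intro hm
    exact j.2 (hm ▸ i.2)
  · intro w hw
    match w with
    | Sum.inl j' =>
      have : j' = j := Subtype.ext hw
      subst this
      exact hj
    | Sum.inr (Sum.inl i') =>
      exact absurd (hw ▸ i'.2) j.2
    | Sum.inr (Sum.inr (i', l')) =>
      exact absurd (hw ▸ i'.2) j.2
end

section
/- Let k ≥ 3 and let S, S' be subsets of {4, …, k} with S ≠ S'. Then the graphs 𝒜_{k,S} and 𝒜_{k,S'} are not isomorphic. -/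
open SimpleGraph

/-- Vertices of the graph `𝒜_k` (and `𝒜_{k,S}`): `Sum.inl a` with `a : Fin 3` is the
unstretched vertex `a + 1 ∈ {1,2,3}`, and `Sum.inr (j, t)` with `j : Fin (k-3)` encodes,
for `i = j + 4 ∈ {4,…,k}`, the hub `i₀` (when `t = 0`) and the wings `i₁, i₂`
(when `t = 1, 2`). -/
abbrev AVert (k : ℕ) := Fin 3 ⊕ (Fin (k - 3) × Fin 3)

/-- Edges of `𝒜_{k,S}`: the triangle `{1,2},{2,3},{1,3}`; for each `4 ≤ i ≤ k` the edges
`{i₀,i₁}, {i₀,i₂}, {i₁,2}, {i₁,3}, {i₂,1}`; for `4 ≤ i < j ≤ k` the edges `{i₂, j₁}`;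
and additionally `{i₂, 2}` for `i ∈ S`. -/
def ARel (k : ℕ) (S : Finset ℕ) : AVert k → AVert k → Prop
  | Sum.inl _, Sum.inl _ => True
  | Sum.inl _, Sum.inr _ => False
  | Sum.inr (j, t), Sum.inl a =>
      (t = 1 ∧ (a = 1 ∨ a = 2)) ∨ (t = 2 ∧ a = 0) ∨ (t = 2 ∧ a = 1 ∧ (j : ℕ) + 4 ∈ S)
  | Sum.inr (j, t), Sum.inr (j', t') =>
      (j = j' ∧ t = 0 ∧ t' ≠ 0) ∨ (t = 2 ∧ t' = 1 ∧ (j : ℕ) < (j' : ℕ))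

/-- The graph `𝒜_{k,S}`; the graph `𝒜_k` is `AGraph k ∅`. -/
def AGraph (k : ℕ) (S : Finset ℕ) : SimpleGraph (AVert k) :=
  SimpleGraph.fromRel (ARel k S)

open Finset

instance (k : ℕ) (S : Finset ℕ) : DecidableRel (ARel k S) := fun u v => by
  rcases u with a | ⟨j, t⟩ <;> rcases v with b | ⟨j', t'⟩ <;> simp only [ARel] <;> infer_instance

instance (k : ℕ) (S : Finset ℕ) : DecidableRel (AGraph k S).Adj := fun u v =>
  decidable_of_iff' _ (SimpleGraph.fromRel_adj (ARel k S) u v)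

lemma degree_eq_sum (k : ℕ) (S : Finset ℕ) (v : AVert k) :
    (AGraph k S).degree v = ∑ u : AVert k, if (AGraph k S).Adj v u then 1 else 0 := by
  rw [← card_neighborFinset_eq_degree, neighborFinset_eq_filter, Finset.card_filter]

lemma adj_simp (k : ℕ) (S : Finset ℕ) (u v : AVert k) :
    (AGraph k S).Adj u v ↔ u ≠ v ∧ (ARel k S u v ∨ ARel k S v u) :=
  SimpleGraph.fromRel_adj _ u v

lemma sum_ite_lt (n m : ℕ) (hm : m ≤ n) :
    (∑ j : Fin n, if (j : ℕ) < m then 1 else 0) = m := by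
  rw [Fin.sum_univ_eq_sum_range (fun j => if j < m then 1 else 0), Finset.sum_boole]
  have : (Finset.range n).filter (fun j => j < m) = Finset.range m := by
    ext x; simp [Finset.mem_filter, Finset.mem_range]; omega
  simp [this]

lemma deg_inl0 (k : ℕ) (S : Finset ℕ) :
    (AGraph k S).degree (Sum.inl 0) = (k - 3) + 2 := by
  rw [degree_eq_sum, Fintype.sum_sum_type, Fintype.sum_prod_type]
  simp only [adj_simp, ARel, Fin.sum_univ_three]
  simp
  ring

lemma sum_ite_gt (n m : ℕ) :
    (∑ j : Fin n, if m < (j : ℕ) then 1 else 0) = n - (m + 1) := by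
  rw [Fin.sum_univ_eq_sum_range (fun j => if m < j then 1 else 0), Finset.sum_boole]
  have h : (Finset.range n).filter (fun j => m < j) = Finset.Ico (m + 1) n := by
    ext x; simp [Finset.mem_filter, Finset.mem_range, Finset.mem_Ico]; omega
  simp [h, Nat.card_Ico]

lemma deg_inl1 (k : ℕ) (S : Finset ℕ) :
    (AGraph k S).degree (Sum.inl 1) =
      (k - 3) + 2 + ∑ j : Fin (k - 3), (if (j : ℕ) + 4 ∈ S then 1 else 0) := by
  rw [degree_eq_sum, Fintype.sum_sum_type, Fintype.sum_prod_type]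
  simp only [adj_simp, ARel, Fin.sum_univ_three]
  simp [Finset.sum_add_distrib]
  ring

lemma deg_inl2 (k : ℕ) (S : Finset ℕ) :
    (AGraph k S).degree (Sum.inl 2) = (k - 3) + 2 := by
  rw [degree_eq_sum, Fintype.sum_sum_type, Fintype.sum_prod_type]
  simp only [adj_simp, ARel, Fin.sum_univ_three]
  simp
  ring

lemma deg_inr0 (k : ℕ) (S : Finset ℕ) (j : Fin (k - 3)) :
    (AGraph k S).degree (Sum.inr (j, 0)) = 2 := by
  rw [degree_eq_sum, Fintype.sum_sum_type, Fintype.sum_prod_type]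
  simp only [adj_simp, ARel, Fin.sum_univ_three]
  simp [Finset.sum_add_distrib, Finset.sum_ite_eq]

lemma deg_inr1 (k : ℕ) (S : Finset ℕ) (j : Fin (k - 3)) :
    (AGraph k S).degree (Sum.inr (j, 1)) = (j : ℕ) + 3 := by
  rw [degree_eq_sum, Fintype.sum_sum_type, Fintype.sum_prod_type]
  simp only [adj_simp, ARel, Fin.sum_univ_three]
  simp
  have h1 : (∑ x : Fin (k - 3), if x = j then 1 else 0) = 1 := by
    simp [Finset.sum_ite_eq']
  have h2 : (∑ x : Fin (k - 3), if x < j then 1 else 0) = (j : ℕ) := by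
    simp only [Fin.lt_def]
    exact sum_ite_lt _ _ j.isLt.le
  rw [Finset.sum_add_distrib, h1, h2]
  omega

lemma deg_inr2 (k : ℕ) (S : Finset ℕ) (j : Fin (k - 3)) :
    (AGraph k S).degree (Sum.inr (j, 2)) =
      (k - 3) + 1 - (j : ℕ) + (if (j : ℕ) + 4 ∈ S then 1 else 0) := by
  rw [degree_eq_sum, Fintype.sum_sum_type, Fintype.sum_prod_type]
  simp only [adj_simp, ARel, Fin.sum_univ_three]
  simp
  have h1 : (∑ x : Fin (k - 3), if x = j then 1 else 0) = 1 := by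
    simp [Finset.sum_ite_eq']
  have h2 : (∑ x : Fin (k - 3), if j < x then 1 else 0) = (k - 3) - ((j : ℕ) + 1) := by
    simp only [Fin.lt_def]
    exact sum_ite_gt _ _
  rw [Finset.sum_add_distrib, h1, h2]
  have := j.isLt
  by_cases hj : (j : ℕ) + 4 ∈ S <;> simp [hj] <;> omega

lemma iso_degree {V W : Type*} [Fintype V] [Fintype W] {G : SimpleGraph V}
    {G' : SimpleGraph W} [DecidableRel G.Adj] [DecidableRel G'.Adj]
    (e : G ≃g G') (v : V) : G'.degree (e v) = G.degree v := by
  rw [← card_neighborSet_eq_degree, ← card_neighborSet_eq_degree]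
  exact (Fintype.card_congr (e.mapNeighborSet v)).symm

lemma iso_count {V W : Type*} [Fintype V] [Fintype W] {G : SimpleGraph V}
    {G' : SimpleGraph W} [DecidableRel G.Adj] [DecidableRel G'.Adj]
    (e : G ≃g G') (d : ℕ) :
    (Finset.univ.filter fun v => d ≤ G.degree v).card
      = (Finset.univ.filter fun w => d ≤ G'.degree w).card := by
  apply Finset.card_bij (fun v _ => e v)
  · intro a ha
    simp only [Finset.mem_filter, Finset.mem_univ, true_and] at ha ⊢
    rwa [iso_degree e]
  · intro a _ b _ h
    exact e.toEquiv.injective h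
  · intro b hb
    simp only [Finset.mem_filter, Finset.mem_univ, true_and] at hb
    refine ⟨e.symm b, ?_, by simp⟩
    simp only [Finset.mem_filter, Finset.mem_univ, true_and]
    rwa [iso_degree e.symm]

lemma sum_ite_ge (n m : ℕ) :
    (∑ j : Fin n, if m ≤ (j : ℕ) then 1 else 0) = n - m := by
  rw [Fin.sum_univ_eq_sum_range (fun j => if m ≤ j then 1 else 0), Finset.sum_boole]
  have h : (Finset.range n).filter (fun j => m ≤ j) = Finset.Ico m n := by
    ext x; simp [Finset.mem_filter, Finset.mem_range, Finset.mem_Ico]; omega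
  simp [h, Nat.card_Ico]

lemma count_formula (k : ℕ) (T : Finset ℕ) (js : ℕ) (hjs : js < k - 3) :
    (Finset.univ.filter fun v : AVert k =>
        (k - 3) + 2 - js ≤ (AGraph k T).degree v).card
      = 3 + (js + 1) + js + (if js + 4 ∈ T then 1 else 0) := by
  rw [Finset.card_filter, Fintype.sum_sum_type, Fintype.sum_prod_type]
  simp only [Fin.sum_univ_three, deg_inl0, deg_inl1, deg_inl2, deg_inr0, deg_inr1, deg_inr2]
  have hb : ∀ j : Fin (k - 3),
      ((if (k-3)+2-js ≤ 2 then (1:ℕ) else 0)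
        + (if (k-3)+2-js ≤ (j:ℕ)+3 then 1 else 0)
        + (if (k-3)+2-js ≤ (k-3)+1-(j:ℕ) + (if (j:ℕ)+4 ∈ T then 1 else 0) then 1 else 0))
      = ((if (k-3)-1-js ≤ (j:ℕ) then 1 else 0)
        + ((if (j:ℕ) < js then 1 else 0)
        + (if j = (⟨js, hjs⟩ : Fin (k-3)) then (if (j:ℕ)+4 ∈ T then (1:ℕ) else 0) else 0))) := by
    intro j
    have hj := j.isLt
    simp only [Fin.ext_iff]
    by_cases h1 : (j:ℕ)+4 ∈ T <;>
      simp only [h1, if_true, if_false] <;> split_ifs <;> omega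
  rw [Finset.sum_congr rfl (fun j _ => hb j)]
  rw [Finset.sum_add_distrib, Finset.sum_add_distrib, sum_ite_ge,
    Finset.sum_ite_eq' Finset.univ (⟨js, hjs⟩ : Fin (k-3))]
  have h1' : (∑ j : Fin (k-3), if (j:ℕ) < js then 1 else 0) = js := by
    exact sum_ite_lt _ _ (le_of_lt hjs)
  rw [h1']
  have e0 : (if (k-3)+2-js ≤ (k-3)+2 then (1:ℕ) else 0) = 1 := if_pos (by omega)
  have e1 : (if (k-3)+2-js ≤ (k-3)+2+(∑ j : Fin (k-3), if (j:ℕ)+4 ∈ T then 1 else 0)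
      then (1:ℕ) else 0) = 1 := if_pos (le_trans (by omega) (Nat.le_add_right _ _))
  rw [e0, e1]
  by_cases hT : js + 4 ∈ T <;> simp [hT] <;> omega

/-- For `k ≥ 3` and distinct subsets `S, S' ⊆ {4,…,k}`, the graphs `𝒜_{k,S}` and
`𝒜_{k,S'}` are not isomorphic. -/
theorem AGraph_not_iso (k : ℕ) (hk : 3 ≤ k) (S S' : Finset ℕ)
    (hS : S ⊆ Finset.Icc 4 k) (hS' : S' ⊆ Finset.Icc 4 k) (hne : S ≠ S') :
    IsEmpty (AGraph k S ≃g AGraph k S') := by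
  constructor
  intro e
  obtain ⟨x, hx⟩ : ∃ x, ¬((x ∈ S) ↔ (x ∈ S')) := by
    by_contra h
    push_neg at h
    exact hne (Finset.ext h)
  have hxIcc : 4 ≤ x ∧ x ≤ k := by
    by_cases hxS : x ∈ S
    · have := Finset.mem_Icc.mp (hS hxS); omega
    · have hxS' : x ∈ S' := by tauto
      have := Finset.mem_Icc.mp (hS' hxS'); omega
  have hjn : x - 4 < k - 3 := by omega
  have h1 := count_formula k S (x - 4) hjn
  have h2 := count_formula k S' (x - 4) hjn
  rw [iso_count e] at h1
  rw [h2] at h1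
  have hx4 : x - 4 + 4 = x := by omega
  rw [hx4] at h1 h2
  by_cases hxS : x ∈ S <;> by_cases hxS' : x ∈ S' <;>
    simp [hxS, hxS'] at h1 hx
end

section
/- For every odd integer k ≥ 3, the graph ℬ_k is vertex-transitive: for any two vertices u, v of ℬ_k there is a graph automorphism of ℬ_k mapping u to v. -/
open SimpleGraph

/-- Edges of the graph `ℬ_k`: vertices are pairs `(i, t)` with `i : ZMod k` (the index in
`{1,…,k}` taken modulo `k`) and `t : Fin 4`; for each `i` the 4-cycle
`{i₀,i₁}, {i₁,i₂}, {i₂,i₃}, {i₃,i₀}`, together with the edges `{i₀, j₂}` and `{i₁, j₃}`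
whenever `j - i ∈ {1, …, (k-1)/2}` modulo `k`. -/
def BRel (k : ℕ) : (ZMod k × Fin 4) → (ZMod k × Fin 4) → Prop := fun a b =>
  (a.1 = b.1 ∧ ((a.2 = 0 ∧ b.2 = 1) ∨ (a.2 = 1 ∧ b.2 = 2) ∨ (a.2 = 2 ∧ b.2 = 3) ∨
      (a.2 = 3 ∧ b.2 = 0))) ∨
  ((∃ m : ℕ, m ∈ Finset.Icc 1 ((k - 1) / 2) ∧ b.1 - a.1 = (m : ZMod k)) ∧
    ((a.2 = 0 ∧ b.2 = 2) ∨ (a.2 = 1 ∧ b.2 = 3)))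

/-- The graph `ℬ_k`. -/
def BGraph (k : ℕ) : SimpleGraph (ZMod k × Fin 4) :=
  SimpleGraph.fromRel (BRel k)

namespace BAux

def mkIso (k : ℕ) (e : (ZMod k × Fin 4) ≃ (ZMod k × Fin 4))
    (h : ∀ a b, (BRel k (e a) (e b) ∨ BRel k (e b) (e a)) ↔ (BRel k a b ∨ BRel k b a)) :
    BGraph k ≃g BGraph k where
  toEquiv := e
  map_rel_iff' := by
    intro a b
    show (BGraph k).Adj (e a) (e b) ↔ (BGraph k).Adj a b
    simp only [BGraph, SimpleGraph.fromRel_adj]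
    exact and_congr (not_congr e.apply_eq_iff_eq) (h a b)

def tau4 : Equiv.Perm (Fin 4) :=
  ⟨![1,0,3,2], ![1,0,3,2], by decide, by decide⟩

def mu4 : Equiv.Perm (Fin 4) :=
  ⟨![2,3,0,1], ![2,3,0,1], by decide, by decide⟩

def rho (k : ℕ) (c : ZMod k) : BGraph k ≃g BGraph k :=
  mkIso k (Equiv.prodCongr (Equiv.addRight c) (Equiv.refl (Fin 4))) (by
    have key : ∀ a b : ZMod k × Fin 4,
        BRel k (a.1 + c, a.2) (b.1 + c, b.2) ↔ BRel k a b := by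
      intro a b
      simp [BRel, add_sub_add_right_eq_sub]
    intro a b
    simp only [Equiv.prodCongr_apply, Equiv.coe_addRight, Equiv.coe_refl, Prod.map, id_eq]
    rw [key, key])

def tauIso (k : ℕ) : BGraph k ≃g BGraph k :=
  mkIso k (Equiv.prodCongr (Equiv.refl (ZMod k)) tau4) (by
    intro a b
    obtain ⟨i, s⟩ := a
    obtain ⟨j, t⟩ := b
    simp only [Equiv.prodCongr_apply, Equiv.coe_refl, Prod.map]
    fin_cases s <;> fin_cases t <;>
      simp [BRel, tau4, eq_comm] <;> tauto)

def muIso (k : ℕ) : BGraph k ≃g BGraph k :=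
  mkIso k (Equiv.prodCongr (Equiv.neg (ZMod k)) mu4) (by
    intro a b
    obtain ⟨i, s⟩ := a
    obtain ⟨j, t⟩ := b
    simp only [Equiv.prodCongr_apply, Equiv.neg_apply, Prod.map]
    fin_cases s <;> fin_cases t <;>
      simp [BRel, mu4, neg_sub_neg, neg_add_eq_sub, neg_inj, eq_comm] <;> tauto)

def F (k : ℕ) (w : ZMod k × Fin 4) : BGraph k ≃g BGraph k :=
  ![rho k w.1,
    (rho k w.1).trans (tauIso k),
    (rho k (-w.1)).trans (muIso k),
    (rho k (-w.1)).trans ((muIso k).trans (tauIso k))] w.2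

lemma F_base (k : ℕ) (w : ZMod k × Fin 4) : F k w (0, 0) = w := by
  obtain ⟨i, t⟩ := w
  fin_cases t <;>
    simp [F, mkIso, rho, tauIso, muIso, tau4, mu4, RelIso.trans_apply,
      Prod.ext_iff, Prod.map_fst, Prod.map_snd]

end BAux

/-- For every odd `k ≥ 3`, the graph `ℬ_k` is vertex-transitive: any vertex can be mapped
to any other vertex by a graph automorphism. -/

theorem BGraph_vertexTransitive (k : ℕ) (hk : 3 ≤ k) (hodd : Odd k) :
    ∀ u v : ZMod k × Fin 4, ∃ φ : BGraph k ≃g BGraph k, φ u = v := by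
  intro u v
  refine ⟨(BAux.F k u).symm.trans (BAux.F k v), ?_⟩
  have h : (BAux.F k u).symm u = (0, 0) :=
    (BAux.F k u).toEquiv.symm_apply_eq.mpr (BAux.F_base k u).symm
  rw [RelIso.trans_apply]
  rw [show (BAux.F k u).symm u = (0,0) from h, BAux.F_base]
end

section
/- Let P ⊆ [0,1]^n be a closed convex set and let P_I = conv(P ∩ {0,1}^n) be its integer hull. Suppose P_I is full-dimensional, let F = {x ∈ P_I : cᵀx = c₀} be a facet of P_I, and let Q ⊆ [0,1]^n be a compact convex set with P_I ⊆ Q and such that the inequality cᵀx ≤ c₀ is not valid for Q. Then the relative interior of F is contained in the interior of Q. -/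
/-!
Let `x` lie in the relative interior of `F`. Since `F` has dimension `n - 1`, its affine span is
the whole hyperplane `cᵀx = c₀`. A point `z` of the interior of `P_I` satisfies `cᵀz ≤ c₀` and a
point `y ∈ Q` violates the inequality, so the segment `[z, y]` meets the hyperplane in a point `m`
of the interior of `Q`. Extending the segment from `m` through `x` slightly beyond `x` stays in
`F ⊆ Q`, so `x` lies strictly between an interior point of `Q` and a point of `Q`, hence in the
interior of `Q`.
-/

open Set Module Topology

section

variable {E : Type*} [AddCommGroup E] [Module ℝ E] [FiniteDimensional ℝ E]

theorem mem_affineSpan_of_finrank_direction_eq_sub_one {F : Set E} {f : Dual ℝ E} (hf : f ≠ 0)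
    {c : ℝ} (hFf : ∀ w ∈ F, f w = c) (hne : F.Nonempty)
    (hdim : finrank ℝ (affineSpan ℝ F).direction = finrank ℝ E - 1) {m : E} (hm : f m = c) :
    m ∈ affineSpan ℝ F := by
  obtain ⟨x, hx⟩ := hne
  have hdir : (affineSpan ℝ F).direction = LinearMap.ker f := by
    refine Submodule.eq_of_le_of_finrank_eq ?_ ?_
    · rw [direction_affineSpan, vectorSpan_def, Submodule.span_le]
      rintro _ ⟨u, hu, v, hv, rfl⟩
      simp [hFf u hu, hFf v hv]
    · have := Dual.finrank_ker_add_one_of_ne_zero hf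
      omega
  have hmx : m -ᵥ x ∈ (affineSpan ℝ F).direction := by simp [hdir, hm, hFf x hx]
  simpa using AffineSubspace.vadd_mem_of_mem_direction hmx (mem_affineSpan ℝ hx)

end

section

variable {E : Type*} [AddCommGroup E] [Module ℝ E] [TopologicalSpace E] [IsTopologicalAddGroup E]
  [ContinuousSMul ℝ E]

theorem exists_mem_openSegment_of_mem_intrinsicInterior {F : Set E} {x m : E}
    (hx : x ∈ intrinsicInterior ℝ F) (hm : m ∈ affineSpan ℝ F) :
    ∃ w ∈ F, x ∈ openSegment ℝ m w := by
  obtain ⟨x, hxF, rfl⟩ := hx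
  let g : ℝ → affineSpan ℝ F := fun t => ⟨AffineMap.lineMap m x t, AffineMap.lineMap_mem t hm x.2⟩
  have hg : Continuous g := by fun_prop
  have hg1 : g 1 = x := by ext; simp [g]
  have hnear : ∀ᶠ t in 𝓝 1, g t ∈ interior ((↑) ⁻¹' F) :=
    hg.continuousAt.eventually_mem (isOpen_interior.mem_nhds (hg1 ▸ hxF))
  obtain ⟨t, hgt, ht⟩ : ∃ t, g t ∈ interior ((↑) ⁻¹' F) ∧ 1 < t :=
    ((hnear.filter_mono nhdsWithin_le_nhds).and (self_mem_nhdsWithin (s := Ioi 1))).exists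
  refine ⟨g t, mem_preimage.mp (interior_subset hgt), ?_⟩
  rw [openSegment_eq_image_lineMap]
  refine ⟨t⁻¹, ⟨by positivity, inv_lt_one_of_one_lt₀ ht⟩, ?_⟩
  simp [g, inv_mul_cancel₀ (by positivity : t ≠ 0)]

end

section

variable {E : Type*} [AddCommGroup E] [Module ℝ E] [TopologicalSpace E] [IsTopologicalAddGroup E]
  [ContinuousConstSMul ℝ E]

theorem Convex.exists_mem_interior_apply_eq {S : Set E} (hS : Convex ℝ S) (f : E →ₗ[ℝ] ℝ)
    {z y : E} (hz : z ∈ interior S) (hy : y ∈ S) {c : ℝ} (hzc : f z ≤ c) (hyc : c < f y) :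
    ∃ m ∈ interior S, f m = c := by
  have hpos : 0 < f y - f z := by linarith
  refine ⟨((f y - c) / (f y - f z)) • z + ((c - f z) / (f y - f z)) • y,
    hS.combo_interior_self_mem_interior hz hy (div_pos (by linarith) hpos)
      (div_nonneg (by linarith) hpos.le) (by field_simp; ring), ?_⟩
  simp only [map_add, map_smul, smul_eq_mul]
  field_simp
  ring

end

theorem relint_facet_subset_interior_general (n : ℕ)
    (c : Fin n → ℝ) (c₀ : ℝ)
    (PI : Set (Fin n → ℝ))
    (hfull : (interior PI).Nonempty)
    (F : Set (Fin n → ℝ)) (hF : F = {x ∈ PI | ∑ i, c i * x i = c₀})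
    (hvalid : ∀ x ∈ PI, ∑ i, c i * x i ≤ c₀)
    (hfacet : Module.finrank ℝ (affineSpan ℝ F).direction = n - 1)
    (Q : Set (Fin n → ℝ)) (hQconv : Convex ℝ Q)
    (hPIQ : PI ⊆ Q)
    (hnotvalid : ∃ x ∈ Q, c₀ < ∑ i, c i * x i) :
    intrinsicInterior ℝ F ⊆ interior Q := by
  intro x hx
  let f : Dual ℝ (Fin n → ℝ) := dotProductBilin ℝ ℝ c
  have hFf : ∀ w ∈ F, f w = c₀ := fun w hw => (hF ▸ hw).2
  have hFPI : F ⊆ PI := fun w hw => (hF ▸ hw).1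
  have hxF : x ∈ F := intrinsicInterior_subset hx
  obtain ⟨y, hyQ, hy : c₀ < f y⟩ := hnotvalid
  have hf : f ≠ 0 := by
    rintro h
    simp only [h, LinearMap.zero_apply] at hy hFf
    linarith [hFf x hxF]
  obtain ⟨z, hz⟩ := hfull
  obtain ⟨m, hmQ, hm⟩ := hQconv.exists_mem_interior_apply_eq f (interior_mono hPIQ hz) hyQ
    (hvalid z (interior_subset hz)) hy
  have hmF : m ∈ affineSpan ℝ F :=
    mem_affineSpan_of_finrank_direction_eq_sub_one hf hFf ⟨x, hxF⟩
      (by rwa [finrank_fin_fun]) hm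
  obtain ⟨w, hwF, hxw⟩ := exists_mem_openSegment_of_mem_intrinsicInterior hx hmF
  exact hQconv.openSegment_interior_self_subset_interior hmQ (hPIQ (hFPI hwF)) hxw

/-- Let `P ⊆ [0,1]^n` be closed and convex, let `P_I` be its integer hull (the convex hull
of its 0/1 points), assumed full-dimensional, and let `F = {x ∈ P_I : cᵀx = c₀}` be a facet
of `P_I` (the inequality `cᵀx ≤ c₀` is valid for `P_I` and `F` has dimension `n - 1`).
If `Q ⊆ [0,1]^n` is a compact convex set containing `P_I` for which `cᵀx ≤ c₀` is not
valid, then the relative interior of `F` is contained in the interior of `Q`. -/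
theorem relint_facet_subset_interior (n : ℕ) (P : Set (Fin n → ℝ))
    (hPc : IsClosed P) (hPconv : Convex ℝ P) (hPbox : P ⊆ Set.Icc 0 1)
    (c : Fin n → ℝ) (c₀ : ℝ)
    (PI : Set (Fin n → ℝ)) (hPI : PI = convexHull ℝ {x ∈ P | ∀ i, x i = 0 ∨ x i = 1})
    (hfull : (interior PI).Nonempty)
    (F : Set (Fin n → ℝ)) (hF : F = {x ∈ PI | ∑ i, c i * x i = c₀})
    (hvalid : ∀ x ∈ PI, ∑ i, c i * x i ≤ c₀)
    (hfacet : Module.finrank ℝ (affineSpan ℝ F).direction = n - 1)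
    (Q : Set (Fin n → ℝ)) (hQc : IsCompact Q) (hQconv : Convex ℝ Q)
    (hQbox : Q ⊆ Set.Icc 0 1) (hPIQ : PI ⊆ Q)
    (hnotvalid : ∃ x ∈ Q, c₀ < ∑ i, c i * x i) :
    intrinsicInterior ℝ F ⊆ interior Q :=
  relint_facet_subset_interior_general n c c₀ PI hfull F hF hvalid hfacet Q hQconv hPIQ hnotvalid
end

section
/- Let G ∈ 𝒦_{n,d} with n ≥ 3 and d ≥ 1, and suppose G ∉ 𝒦̃_{n,d}. Then there exists a stretched index i and ℓ ∈ {1,2} such that the graph G − {i₀, i_{3−ℓ}} obtained by deleting the hub vertex i₀ and the wing vertex i_{3−ℓ} belongs to 𝒦_{n,d−1}, with the remaining wing vertex i_ℓ playing the role of an unstretched vertex (i.e., i_ℓ is adjacent, for every j ≠ i, to some vertex associated with j, and the induced structure on the remaining vertices matches the definition of a d−1-fold 2-stretching of K_n). -/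
open SimpleGraph

/-!
If the wing `i_ℓ` is adjacent to every unstretched vertex and to some wing of every other
stretched index, it can stand in for an unstretched vertex `i`. Mapping the stretching of `K_n`
at `D \ {i}` into the stretching at `D` by sending the unstretched vertex `i` to `i_ℓ` (and every
other vertex to its namesake) is then an induced embedding whose image misses exactly `i₀` and
`i_{3-ℓ}`; the wing-to-`i` edges of the smaller stretching are the old wing-to-`i_ℓ` edges, so
the covering conditions carry over.
-/

namespace KGraph

variable {n : ℕ} {D : Finset (Fin n)}
  (W : {i : Fin n // i ∈ D} → Fin 2 → {j : Fin n // j ∉ D} → Prop)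
  (X : {i : Fin n // i ∈ D} → Fin 2 → {i : Fin n // i ∈ D} → Fin 2 → Prop)

def ofErase (i : {i : Fin n // i ∈ D}) (a : {x : Fin n // x ∈ D.erase i.1}) :
    {x : Fin n // x ∈ D} :=
  ⟨a.1, Finset.mem_of_mem_erase a.2⟩

lemma ofErase_ne (i : {i : Fin n // i ∈ D}) (a : {x : Fin n // x ∈ D.erase i.1}) :
    ofErase i a ≠ i :=
  fun h => (Finset.mem_erase.1 a.2).1 (congrArg Subtype.val h)

lemma ofErase_injective (i : {i : Fin n // i ∈ D}) : Function.Injective (ofErase i) :=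
  fun _ _ h => Subtype.ext (congrArg Subtype.val h :)

def unstretch (i : {i : Fin n // i ∈ D}) (l : Fin 2) : KVert n (D.erase i.1) → KVert n D
  | Sum.inl j =>
      if hj : j.1 = i.1 then Sum.inr (Sum.inr (i, l))
      else Sum.inl ⟨j.1, fun h => j.2 (Finset.mem_erase.2 ⟨hj, h⟩)⟩
  | Sum.inr (Sum.inl a) => Sum.inr (Sum.inl (ofErase i a))
  | Sum.inr (Sum.inr (a, m)) => Sum.inr (Sum.inr (ofErase i a, m))

/-- A wing is adjacent to the new unstretched vertex `i` iff it was adjacent to the wing `i_ℓ`. -/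
def unstretchW (i : {i : Fin n // i ∈ D}) (l : Fin 2) :
    {x : Fin n // x ∈ D.erase i.1} → Fin 2 → {j : Fin n // j ∉ D.erase i.1} → Prop :=
  fun a m j =>
    if hj : j.1 = i.1 then X (ofErase i a) m i l ∨ X i l (ofErase i a) m
    else W (ofErase i a) m ⟨j.1, fun h => j.2 (Finset.mem_erase.2 ⟨hj, h⟩)⟩

def unstretchX (i : {i : Fin n // i ∈ D}) :
    {x : Fin n // x ∈ D.erase i.1} → Fin 2 → {x : Fin n // x ∈ D.erase i.1} → Fin 2 → Prop :=
  fun a m b m' => X (ofErase i a) m (ofErase i b) m'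

lemma fin_two_ne_one_sub : ∀ l : Fin 2, l ≠ 1 - l := by decide

lemma fin_two_eq_of_ne_one_sub : ∀ l m : Fin 2, m ≠ 1 - l → m = l := by decide

lemma unstretch_injective (i : {i : Fin n // i ∈ D}) (l : Fin 2) :
    Function.Injective (unstretch i l) := by
  rintro (j | a | ⟨a, m⟩) (j' | a' | ⟨a', m'⟩) h <;>
    simp only [unstretch] at h <;> (try split_ifs at h) <;>
    grind [ofErase_ne, ofErase_injective, Subtype.ext_iff]

lemma range_unstretch (i : {i : Fin n // i ∈ D}) (l : Fin 2) :
    Set.range (unstretch i l) =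
      {v : KVert n D | v ≠ Sum.inr (Sum.inl i) ∧ v ≠ Sum.inr (Sum.inr (i, 1 - l))} := by
  ext v
  constructor
  · rintro ⟨j | a | ⟨a, m⟩, rfl⟩
    · simp only [unstretch]
      split_ifs <;> simp [fin_two_ne_one_sub]
    · simp [unstretch, ofErase_ne]
    · simp [unstretch, ofErase_ne]
  · rintro ⟨hhub, hwing⟩
    rcases v with j | a | ⟨a, m⟩
    · have hj : j.1 ≠ i.1 := fun h => j.2 (h ▸ i.2)
      exact ⟨Sum.inl ⟨j.1, fun h => j.2 (Finset.mem_of_mem_erase h)⟩, by simp [unstretch, hj]⟩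
    · have ha : a.1 ≠ i.1 := fun h => hhub (by rw [Subtype.ext h])
      exact ⟨Sum.inr (Sum.inl ⟨a.1, Finset.mem_erase.2 ⟨ha, a.2⟩⟩), rfl⟩
    · by_cases ha : a = i
      · subst ha
        have hm : m = l := fin_two_eq_of_ne_one_sub l m (fun h => hwing (by rw [h]))
        exact ⟨Sum.inl ⟨a.1, by simp⟩, by simp [unstretch, hm]⟩
      · have ha' : a.1 ∈ D.erase i.1 := Finset.mem_erase.2 ⟨fun h => ha (Subtype.ext h), a.2⟩
        exact ⟨Sum.inr (Sum.inr (⟨a.1, ha'⟩, m)), rfl⟩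

lemma adj_unstretch_iff {i : {i : Fin n // i ∈ D}} {l : Fin 2} (hW : ∀ j, W i l j)
    (v w : KVert n (D.erase i.1)) :
    (KGraph n D W X).Adj (unstretch i l v) (unstretch i l w) ↔
      (KGraph n (D.erase i.1) (unstretchW W X i l) (unstretchX X i)).Adj v w := by
  rcases v with j | a | ⟨a, m⟩ <;> rcases w with j' | a' | ⟨a', m'⟩ <;>
    simp only [unstretch] <;> (try split_ifs) <;>
    simp_all [KGraph, KRel, unstretchW, unstretchX, ofErase_ne, (ofErase_ne i _).symm,
      (ofErase_injective i).eq_iff, or_comm]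
  all_goals grind [Subtype.ext_iff]

def unstretchEmbedding {i : {i : Fin n // i ∈ D}} {l : Fin 2} (hW : ∀ j, W i l j) :
    KGraph n (D.erase i.1) (unstretchW W X i l) (unstretchX X i) ↪g KGraph n D W X :=
  ⟨⟨unstretch i l, unstretch_injective i l⟩, adj_unstretch_iff W X hW _ _⟩

lemma kCover_unstretch {i : {i : Fin n // i ∈ D}} {l : Fin 2} (hcov : KCover n D W X)
    (hX : ∀ i', i' ≠ i → ∃ l', X i l i' l' ∨ X i' l' i l) :
    KCover n (D.erase i.1) (unstretchW W X i l) (unstretchX X i) := by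
  refine ⟨fun a j => ?_, fun a b hab => hcov.2 _ _ ((ofErase_injective i).ne hab)⟩
  by_cases hj : j.1 = i.1
  · obtain ⟨l', hl'⟩ := hX (ofErase i a) (ofErase_ne i a)
    have hadj : unstretchW W X i l a l' j := by
      rw [unstretchW, dif_pos hj]
      exact hl'.symm
    fin_cases l' <;> simp_all
  · simp only [unstretchW, dif_neg hj]
    exact hcov.1 _ _

end KGraph

theorem notTilde_delete_mem_general (n : ℕ) (D : Finset (Fin n))
    (W : {i : Fin n // i ∈ D} → Fin 2 → {j : Fin n // j ∉ D} → Prop)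
    (X : {i : Fin n // i ∈ D} → Fin 2 → {i : Fin n // i ∈ D} → Fin 2 → Prop)
    (hcov : KCover n D W X)
    (hnotTilde : ∃ (i : {i : Fin n // i ∈ D}) (l : Fin 2),
      (∀ j, W i l j) ∧ ∀ i', i' ≠ i → ∃ l', X i l i' l' ∨ X i' l' i l) :
    ∃ (i : {i : Fin n // i ∈ D}) (l : Fin 2),
      ((∀ j, W i l j) ∧ ∀ i', i' ≠ i → ∃ l', X i l i' l' ∨ X i' l' i l) ∧
      InK n (D.card - 1)
        (SimpleGraph.induce
          {v : KVert n D | v ≠ Sum.inr (Sum.inl i) ∧ v ≠ Sum.inr (Sum.inr (i, 1 - l))}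
          (KGraph n D W X)) := by
  obtain ⟨i, l, hW, hX⟩ := hnotTilde
  refine ⟨i, l, ⟨hW, hX⟩, D.erase i.1, KGraph.unstretchW W X i l, KGraph.unstretchX X i,
    Finset.card_erase_of_mem i.2, KGraph.kCover_unstretch W X hcov hX, ?_⟩
  rw [← KGraph.range_unstretch i l]
  exact ⟨(KGraph.unstretchEmbedding W X hW).isoInduceRange.symm⟩

/-- If `G ∈ 𝒦_{n,d}` (with `d ≥ 1`) is not in `𝒦̃_{n,d}`, i.e. some wing vertex `i_ℓ`
satisfies `Γ̃_G(i_ℓ) = [n] \ {i}`, then there is a stretched index `i` and `ℓ ∈ {1,2}` such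
that deleting the hub `i₀` and the other wing `i_{3-ℓ}` yields a graph in `𝒦_{n,d-1}`. -/
theorem notTilde_delete_mem (n : ℕ) (hn : 3 ≤ n) (D : Finset (Fin n))
    (W : {i : Fin n // i ∈ D} → Fin 2 → {j : Fin n // j ∉ D} → Prop)
    (X : {i : Fin n // i ∈ D} → Fin 2 → {i : Fin n // i ∈ D} → Fin 2 → Prop)
    (hd : 1 ≤ D.card) (hcov : KCover n D W X)
    (hnotTilde : ∃ (i : {i : Fin n // i ∈ D}) (l : Fin 2),
      (∀ j, W i l j) ∧ ∀ i', i' ≠ i → ∃ l', X i l i' l' ∨ X i' l' i l) :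
    ∃ (i : {i : Fin n // i ∈ D}) (l : Fin 2),
      ((∀ j, W i l j) ∧ ∀ i', i' ≠ i → ∃ l', X i l i' l' ∨ X i' l' i l) ∧
      InK n (D.card - 1)
        (SimpleGraph.induce
          {v : KVert n D | v ≠ Sum.inr (Sum.inl i) ∧ v ≠ Sum.inr (Sum.inr (i, 1 - l))}
          (KGraph n D W X)) :=
  notTilde_delete_mem_general n D W X hcov hnotTilde
end

section
/- Let G ∈ 𝒦_{n,d} with n ≥ 3 and d ≥ 0, let i be a stretched index of G, and let i₀ be the corresponding hub vertex. Then the graph G ⊖ i₀, obtained from G by deleting i₀ together with all of its neighbors (namely i₁ and i₂), belongs to 𝒦_{n−1, d−1}. -/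
open SimpleGraph

section Destroy

variable {m : ℕ} (D : Finset (Fin (m + 1)))
  (W : {i : Fin (m+1) // i ∈ D} → Fin 2 → {j : Fin (m+1) // j ∉ D} → Prop)
  (X : {i : Fin (m+1) // i ∈ D} → Fin 2 → {i : Fin (m+1) // i ∈ D} → Fin 2 → Prop)
  (i : {i : Fin (m+1) // i ∈ D})

/-- The new stretched set after removing index `i`. -/
def Dnew : Finset (Fin m) :=
  Finset.univ.filter (fun x => (i : Fin (m+1)).succAbove x ∈ D)

lemma mem_Dnew (x : Fin m) : x ∈ Dnew D i ↔ (i : Fin (m+1)).succAbove x ∈ D := by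
  simp [Dnew]

def fI (x : {x : Fin m // x ∈ Dnew D i}) : {y : Fin (m+1) // y ∈ D} :=
  ⟨(i : Fin (m+1)).succAbove x, (mem_Dnew D i x).mp x.2⟩

def fJ (x : {x : Fin m // x ∉ Dnew D i}) : {y : Fin (m+1) // y ∉ D} :=
  ⟨(i : Fin (m+1)).succAbove x, fun h => x.2 ((mem_Dnew D i x).mpr h)⟩

@[simp] lemma fI_inj {a b : {x : Fin m // x ∈ Dnew D i}} : fI D i a = fI D i b ↔ a = b := by
  constructor
  · intro h
    exact Subtype.ext (Fin.succAbove_right_injective (congrArg Subtype.val h))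
  · rintro rfl; rfl

@[simp] lemma fJ_inj {a b : {x : Fin m // x ∉ Dnew D i}} : fJ D i a = fJ D i b ↔ a = b := by
  constructor
  · intro h
    exact Subtype.ext (Fin.succAbove_right_injective (congrArg Subtype.val h))
  · rintro rfl; rfl

@[simp] lemma fI_ne (a : {x : Fin m // x ∈ Dnew D i}) : fI D i a ≠ i := by
  intro h
  exact Fin.succAbove_ne (i : Fin (m+1)) a (congrArg Subtype.val h)

def Wnew : {x : Fin m // x ∈ Dnew D i} → Fin 2 → {x : Fin m // x ∉ Dnew D i} → Prop :=
  fun a l b => W (fI D i a) l (fJ D i b)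

def Xnew : {x : Fin m // x ∈ Dnew D i} → Fin 2 → {x : Fin m // x ∈ Dnew D i} → Fin 2 → Prop :=
  fun a l b l' => X (fI D i a) l (fI D i b) l'

lemma card_Dnew : (Dnew D i).card = D.card - 1 := by
  have himg : (Dnew D i).image (i : Fin (m+1)).succAbove = D.erase (i : Fin (m+1)) := by
    ext y
    simp only [Finset.mem_image, Finset.mem_erase]
    constructor
    · rintro ⟨x, hx, rfl⟩
      exact ⟨Fin.succAbove_ne _ _, (mem_Dnew D i x).mp hx⟩
    · rintro ⟨hne, hy⟩
      obtain ⟨x, rfl⟩ := Fin.exists_succAbove_eq hne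
      exact ⟨x, (mem_Dnew D i x).mpr hy, rfl⟩
  have := congrArg Finset.card himg
  rwa [Finset.card_image_of_injective _ Fin.succAbove_right_injective,
    Finset.card_erase_of_mem i.2] at this

/-- The vertex map. -/
def Fv : KVert m (Dnew D i) → KVert (m+1) D
  | Sum.inl x => Sum.inl (fJ D i x)
  | Sum.inr (Sum.inl x) => Sum.inr (Sum.inl (fI D i x))
  | Sum.inr (Sum.inr (x, l)) => Sum.inr (Sum.inr (fI D i x, l))

lemma hub_adj_iff (v : KVert (m+1) D) :
    (KGraph (m+1) D W X).Adj (Sum.inr (Sum.inl i)) v ↔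
      ∃ l, v = Sum.inr (Sum.inr (i, l)) := by
  rcases v with j | j | ⟨j, l⟩ <;>
    simp [KGraph, SimpleGraph.fromRel_adj, KRel, eq_comm]

lemma Fv_mem (a : KVert m (Dnew D i)) :
    Fv D i a ∈ {v : KVert (m+1) D | v ≠ Sum.inr (Sum.inl i) ∧
      v ∉ (KGraph (m+1) D W X).neighborSet (Sum.inr (Sum.inl i))} := by
  have hne := fI_ne D i
  constructor
  · rcases a with x | x | ⟨x, l⟩ <;> simp_all [Fv]
  · rw [SimpleGraph.mem_neighborSet, hub_adj_iff]
    rintro ⟨l, hl⟩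
    rcases a with x | x | ⟨x, l'⟩ <;> simp_all [Fv]

lemma krel_iff (a b : KVert m (Dnew D i)) :
    KRel m (Dnew D i) (Wnew D W i) (Xnew D X i) a b ↔
      KRel (m+1) D W X (Fv D i a) (Fv D i b) := by
  rcases a with x | x | ⟨x, l⟩ <;> rcases b with y | y | ⟨y, l'⟩ <;>
    simp [KRel, Fv, Wnew, Xnew]

lemma Fv_injective : Function.Injective (Fv D i) := by
  rintro (x | x | ⟨x, l⟩) (y | y | ⟨y, l'⟩) h <;> simp_all [Fv]

end Destroy

/-- For a stretched clique `G ∈ 𝒦_{n,d}` and a stretched index `i` with hub vertex `i₀`,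
the destruction `G ⊖ i₀` (deleting `i₀` together with all its neighbors, namely the wings
`i₁, i₂`) belongs to `𝒦_{n-1, d-1}`. -/
theorem destroy_hub_mem (n : ℕ) (hn : 3 ≤ n) (D : Finset (Fin n))
    (W : {i : Fin n // i ∈ D} → Fin 2 → {j : Fin n // j ∉ D} → Prop)
    (X : {i : Fin n // i ∈ D} → Fin 2 → {i : Fin n // i ∈ D} → Fin 2 → Prop)
    (hcov : KCover n D W X) (i : {i : Fin n // i ∈ D}) :
    InK (n - 1) (D.card - 1)
      (SimpleGraph.induce
        {v : KVert n D | v ≠ Sum.inr (Sum.inl i) ∧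
          v ∉ (KGraph n D W X).neighborSet (Sum.inr (Sum.inl i))}
        (KGraph n D W X)) := by
  obtain ⟨m, rfl⟩ : ∃ m, n = m + 1 := ⟨n - 1, by omega⟩
  simp only [Nat.add_sub_cancel]
  refine ⟨Dnew D i, Wnew D W i, Xnew D X i, card_Dnew D i, ?_, ?_⟩
  · constructor
    · intro a j
      exact hcov.1 (fI D i a) (fJ D i j)
    · intro a b hab
      exact hcov.2 (fI D i a) (fI D i b) (fun h => hab ((fI_inj D i).mp h))
  · set S := {v : KVert (m+1) D | v ≠ Sum.inr (Sum.inl i) ∧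
      v ∉ (KGraph (m+1) D W X).neighborSet (Sum.inr (Sum.inl i))}
    have hbij : Function.Bijective
        (fun a : KVert m (Dnew D i) => (⟨Fv D i a, Fv_mem D W X i a⟩ : S)) := by
      constructor
      · intro a b h
        exact Fv_injective D i (congrArg Subtype.val h)
      · rintro ⟨v, hv1, hv2⟩
        rcases v with j | j | ⟨j, l⟩
        · have hne : (j : Fin (m+1)) ≠ (i : Fin (m+1)) := fun h => j.2 (h ▸ i.2)
          obtain ⟨x, hx⟩ := Fin.exists_succAbove_eq hne
          refine ⟨Sum.inl ⟨x, fun h => j.2 ?_⟩, ?_⟩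
          · have := (mem_Dnew D i x).mp h
            rwa [hx] at this
          · apply Subtype.ext
            simp only [Fv, fJ]
            exact congrArg Sum.inl (Subtype.ext hx)
        · have hne : (j : Fin (m+1)) ≠ (i : Fin (m+1)) := by
            intro h
            exact hv1 (by simp [Subtype.ext h])
          obtain ⟨x, hx⟩ := Fin.exists_succAbove_eq hne
          refine ⟨Sum.inr (Sum.inl ⟨x, (mem_Dnew D i x).mpr (hx ▸ j.2)⟩), ?_⟩
          apply Subtype.ext
          simp only [Fv, fI]
          exact congrArg (fun z => Sum.inr (Sum.inl z)) (Subtype.ext hx)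
        · have hne : (j : Fin (m+1)) ≠ (i : Fin (m+1)) := by
            intro h
            apply hv2
            rw [SimpleGraph.mem_neighborSet, hub_adj_iff]
            exact ⟨l, by simp [Subtype.ext h]⟩
          obtain ⟨x, hx⟩ := Fin.exists_succAbove_eq hne
          refine ⟨Sum.inr (Sum.inr (⟨x, (mem_Dnew D i x).mpr (hx ▸ j.2)⟩, l)), ?_⟩
          apply Subtype.ext
          simp only [Fv, fI]
          exact congrArg (fun z => Sum.inr (Sum.inr (z, l))) (Subtype.ext hx)
    refine ⟨(SimpleGraph.Iso.symm ⟨Equiv.ofBijective _ hbij, ?_⟩ : _ ≃g _)⟩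
    intro a b
    show (KGraph (m+1) D W X).Adj (Fv D i a) (Fv D i b) ↔ _
    simp only [KGraph, SimpleGraph.fromRel_adj]
    rw [← krel_iff D W X i a b, ← krel_iff D W X i b a,
      (Fv_injective D i).ne_iff]
end

section
/- For every odd integer k ≥ 3, the subgraph ℬ'_k of ℬ_k induced by the vertices {i₀, i₁, i₂ : i ∈ {1,…,k}} is triangle-free, i.e., ω(ℬ'_k) = 2. -/
open SimpleGraph

lemma m_ne {k : ℕ} (hk : 3 ≤ k) {m : ℕ} (hm : m ∈ Finset.Icc 1 ((k - 1) / 2)) :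
    (m : ZMod k) ≠ 0 := by
  haveI : NeZero k := ⟨by omega⟩
  simp only [Finset.mem_Icc] at hm
  intro h
  rw [ZMod.natCast_eq_zero_iff] at h
  have := Nat.le_of_dvd (by omega) h
  omega

lemma adj_cases {k : ℕ} {a b : ZMod k × Fin 4} (ha : a.2 ≠ 3) (hb : b.2 ≠ 3)
    (h : (BGraph k).Adj a b) :
    (a.1 = b.1 ∧ ((a.2 = 0 ∧ b.2 = 1) ∨ (a.2 = 1 ∧ b.2 = 0) ∨ (a.2 = 1 ∧ b.2 = 2) ∨
      (a.2 = 2 ∧ b.2 = 1))) ∨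
    ((∃ m : ℕ, m ∈ Finset.Icc 1 ((k - 1) / 2) ∧ b.1 - a.1 = (m : ZMod k)) ∧
      a.2 = 0 ∧ b.2 = 2) ∨
    ((∃ m : ℕ, m ∈ Finset.Icc 1 ((k - 1) / 2) ∧ a.1 - b.1 = (m : ZMod k)) ∧
      a.2 = 2 ∧ b.2 = 0) := by
  rw [BGraph, fromRel_adj] at h
  obtain ⟨-, h | h⟩ := h <;> unfold BRel at h
  · rcases h with ⟨e, t⟩ | ⟨hex, t⟩
    · rcases t with ⟨t1, t2⟩ | ⟨t1, t2⟩ | ⟨t1, t2⟩ | ⟨t1, t2⟩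
      · exact Or.inl ⟨e, Or.inl ⟨t1, t2⟩⟩
      · exact Or.inl ⟨e, Or.inr (Or.inr (Or.inl ⟨t1, t2⟩))⟩
      · exact absurd t2 hb
      · exact absurd t1 ha
    · rcases t with ⟨t1, t2⟩ | ⟨t1, t2⟩
      · exact Or.inr (Or.inl ⟨hex, t1, t2⟩)
      · exact absurd t2 hb
  · rcases h with ⟨e, t⟩ | ⟨hex, t⟩
    · rcases t with ⟨t1, t2⟩ | ⟨t1, t2⟩ | ⟨t1, t2⟩ | ⟨t1, t2⟩
      · exact Or.inl ⟨e.symm, Or.inr (Or.inl ⟨t2, t1⟩)⟩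
      · exact Or.inl ⟨e.symm, Or.inr (Or.inr (Or.inr ⟨t2, t1⟩))⟩
      · exact absurd t2 ha
      · exact absurd t1 hb
    · rcases t with ⟨t1, t2⟩ | ⟨t1, t2⟩
      · exact Or.inr (Or.inr ⟨hex, t2, t1⟩)
      · exact absurd t2 ha

/-- For every odd `k ≥ 3`, the subgraph `ℬ'_k` of `ℬ_k` induced by the vertices
`{i₀, i₁, i₂ : i ∈ [k]}` has clique number `2`: it has an edge but is triangle-free. -/
theorem BGraph_induced_triangleFree (k : ℕ) (hk : 3 ≤ k) (hodd : Odd k) :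
    (∃ u v, (SimpleGraph.induce {p : ZMod k × Fin 4 | p.2 ≠ 3} (BGraph k)).Adj u v) ∧
    (SimpleGraph.induce {p : ZMod k × Fin 4 | p.2 ≠ 3} (BGraph k)).CliqueFree 3 := by
  constructor
  · refine ⟨⟨(0, 0), by simp⟩, ⟨(0, 1), by simp⟩, ?_⟩
    show (BGraph k).Adj (0, 0) (0, 1)
    rw [BGraph, fromRel_adj]
    exact ⟨fun h => absurd (congrArg Prod.snd h) (by simp),
      Or.inl (Or.inl ⟨rfl, Or.inl ⟨rfl, rfl⟩⟩)⟩
  · intro s hs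
    rw [is3Clique_iff] at hs
    obtain ⟨a, b, c, hab, hac, hbc, -⟩ := hs
    have ha := a.2; have hb := b.2; have hc := c.2
    simp only [Set.mem_setOf_eq] at ha hb hc
    have H1 := adj_cases ha hb hab
    have H2 := adj_cases ha hc hac
    have H3 := adj_cases hb hc hbc
    rcases H1 with ⟨e1, ⟨x1, y1⟩ | ⟨x1, y1⟩ | ⟨x1, y1⟩ | ⟨x1, y1⟩⟩ | ⟨⟨m1, hm1, hd1⟩, x1, y1⟩ | ⟨⟨m1, hm1, hd1⟩, x1, y1⟩ <;>
    rcases H2 with ⟨e2, ⟨x2, y2⟩ | ⟨x2, y2⟩ | ⟨x2, y2⟩ | ⟨x2, y2⟩⟩ | ⟨⟨m2, hm2, hd2⟩, x2, y2⟩ | ⟨⟨m2, hm2, hd2⟩, x2, y2⟩ <;>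
    rcases H3 with ⟨e3, ⟨x3, y3⟩ | ⟨x3, y3⟩ | ⟨x3, y3⟩ | ⟨x3, y3⟩⟩ | ⟨⟨m3, hm3, hd3⟩, x3, y3⟩ | ⟨⟨m3, hm3, hd3⟩, x3, y3⟩ <;>
    first
    | exact absurd (x1.symm.trans x2) (by decide)
    | exact absurd (y1.symm.trans x3) (by decide)
    | exact absurd (y2.symm.trans y3) (by decide)
    | exact m_ne hk hm1 (by rw [← hd1, e2, e3]; exact sub_self _)
    | exact m_ne hk hm2 (by rw [← hd2, e1, e3]; exact sub_self _)
    | exact m_ne hk hm3 (by rw [← hd3, ← e1, ← e2]; exact sub_self _)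
end

section
/- For every graph G, FRAC(G) = STAB(G) if and only if G is bipartite. -/
open SimpleGraph Finset

/-- The successor of `t` within a finite set of reals. -/
noncomputable def nxt (T : Finset ℝ) (t : ℝ) : ℝ := sInf {s : ℝ | s ∈ T ∧ t < s}

lemma nxt_spec {T : Finset ℝ} {t a : ℝ} (ha : a ∈ T) (hta : t < a) :
    nxt T t ∈ T ∧ t < nxt T t ∧ ∀ s ∈ T, t < s → nxt T t ≤ s := by
  have hfin : {s : ℝ | s ∈ T ∧ t < s}.Finite := T.finite_toSet.subset fun s hs => hs.1
  have hne : {s : ℝ | s ∈ T ∧ t < s}.Nonempty := ⟨a, ha, hta⟩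
  have hmem := hne.csInf_mem hfin
  exact ⟨hmem.1, hmem.2, fun s hs hts => csInf_le hfin.bddBelow ⟨hs, hts⟩⟩

/-- Telescoping sum over a finite set of thresholds. -/
lemma tele (T : Finset ℝ) (h0 : (0:ℝ) ∈ T) (hpos : ∀ t ∈ T, (0:ℝ) ≤ t)
    {a : ℝ} (ha : a ∈ T) :
    ∑ t ∈ T.filter (fun t => t < a), (nxt T t - t) = a := by
  classical
  have key : (T.filter (fun t => t < a)).image (nxt T)
      = T.filter (fun s => 0 < s ∧ s ≤ a) := by
    apply Finset.ext; intro s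
    simp only [mem_image, mem_filter]
    constructor
    · rintro ⟨t, ⟨htT, hta⟩, rfl⟩
      obtain ⟨h1, h2, h3⟩ := nxt_spec ha hta
      exact ⟨h1, lt_of_le_of_lt (hpos t htT) h2, h3 a ha hta⟩
    · rintro ⟨hsT, hs0, hsa⟩
      set p := sSup {u : ℝ | u ∈ T ∧ u < s} with hp
      have hfin : {u : ℝ | u ∈ T ∧ u < s}.Finite := T.finite_toSet.subset fun u hu => hu.1
      have hne : {u : ℝ | u ∈ T ∧ u < s}.Nonempty := ⟨0, h0, hs0⟩
      have hpmem := hne.csSup_mem hfin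
      have hps : p < s := hpmem.2
      obtain ⟨h1, h2, h3⟩ := nxt_spec hsT hps
      have heq : nxt T p = s := by
        rcases lt_or_eq_of_le (h3 s hsT hps) with hlt | h
        · exact absurd (le_csSup hfin.bddAbove ⟨h1, hlt⟩) (not_le_of_gt h2)
        · exact h
      exact ⟨p, ⟨hpmem.1, lt_of_lt_of_le hps hsa⟩, heq⟩
  have hinj : ∀ t1 ∈ T.filter (fun t => t < a), ∀ t2 ∈ T.filter (fun t => t < a),
      nxt T t1 = nxt T t2 → t1 = t2 := by
    intro t1 h1 t2 h2 h
    simp only [mem_filter] at h1 h2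
    rcases lt_trichotomy t1 t2 with hlt | he | hlt
    · have hb1 := (nxt_spec ha h1.2).2.2 t2 h2.1 hlt
      have hb2 := (nxt_spec ha h2.2).2.1
      linarith
    · exact he
    · have hb1 := (nxt_spec ha h2.2).2.2 t1 h1.1 hlt
      have hb2 := (nxt_spec ha h1.2).2.1
      linarith
  have hsum_nxt : ∑ t ∈ T.filter (fun t => t < a), nxt T t
      = ∑ s ∈ T.filter (fun s => 0 < s ∧ s ≤ a), s := by
    rw [← key, Finset.sum_image hinj]
  have hins : T.filter (fun s => s ≤ a) = insert (0:ℝ) (T.filter (fun s => 0 < s ∧ s ≤ a)) := by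
    ext s
    simp only [mem_filter, mem_insert]
    constructor
    · rintro ⟨hsT, hsa⟩
      rcases eq_or_lt_of_le (hpos s hsT) with h | h
      · exact Or.inl h.symm
      · exact Or.inr ⟨hsT, h, hsa⟩
    · rintro (rfl | ⟨h1, h2, h3⟩)
      · exact ⟨h0, hpos a ha⟩
      · exact ⟨h1, h3⟩
  have h0notin : (0:ℝ) ∉ T.filter (fun s => 0 < s ∧ s ≤ a) := by simp
  have hins2 : T.filter (fun s => s ≤ a) = insert a (T.filter (fun t => t < a)) := by
    ext s
    simp only [mem_filter, mem_insert]
    constructor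
    · rintro ⟨hsT, hsa⟩
      rcases eq_or_lt_of_le hsa with h | h
      · exact Or.inl h
      · exact Or.inr ⟨hsT, h⟩
    · rintro (rfl | ⟨hs1, hs2⟩)
      · exact ⟨ha, le_refl _⟩
      · exact ⟨hs1, le_of_lt hs2⟩
  have hanotin : a ∉ T.filter (fun t => t < a) := by simp
  have e1 : ∑ s ∈ T.filter (fun s => s ≤ a), s
      = 0 + ∑ s ∈ T.filter (fun s => 0 < s ∧ s ≤ a), s := by
    rw [hins, Finset.sum_insert h0notin]
  have e2 : ∑ s ∈ T.filter (fun s => s ≤ a), s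
      = a + ∑ s ∈ T.filter (fun t => t < a), s := by
    rw [hins2, Finset.sum_insert hanotin]
  rw [Finset.sum_sub_distrib, hsum_nxt]
  linarith

/-- For every finite graph `G`, the fractional stable set polytope `FRAC(G)` equals the
stable set polytope `STAB(G)` (the convex hull of incidence vectors of stable sets)
if and only if `G` is bipartite (i.e. 2-colorable). -/
theorem frac_eq_stab_iff_bipartite {V : Type*} [Fintype V] [DecidableEq V]
    (G : SimpleGraph V) :
    ({x : V → ℝ | (∀ v, 0 ≤ x v ∧ x v ≤ 1) ∧ ∀ u w, G.Adj u w → x u + x w ≤ 1} =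
        convexHull ℝ {x : V → ℝ | ∃ s : Finset V,
          ((↑s : Set V).Pairwise fun u w => ¬ G.Adj u w) ∧
          x = fun v => if v ∈ s then (1 : ℝ) else 0}) ↔
      G.Colorable 2 := by
  classical
  constructor
  · -- FRAC = STAB → bipartite
    intro h
    have hhalf : (fun _ : V => (1:ℝ)/2) ∈
        {x : V → ℝ | (∀ v, 0 ≤ x v ∧ x v ≤ 1) ∧ ∀ u w, G.Adj u w → x u + x w ≤ 1} :=
      ⟨fun v => ⟨by norm_num, by norm_num⟩, fun u w _ => by norm_num⟩
    rw [h, _root_.convexHull_eq] at hhalf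
    obtain ⟨ι, t, w, z, hw0, hw1, hz, hcm⟩ := hhalf
    have hex : ∃ i ∈ t, 0 < w i := by
      by_contra hc
      push_neg at hc
      have hzero : ∑ i ∈ t, w i = 0 :=
        Finset.sum_eq_zero fun i hi => le_antisymm (hc i hi) (hw0 i hi)
      rw [hw1] at hzero; norm_num at hzero
    obtain ⟨i0, hi0t, hi0⟩ := hex
    obtain ⟨s0, hs0stable, hz0⟩ := hz i0 hi0t
    have hcm2 : ∀ v, ∑ i ∈ t, w i * z i v = 1/2 := by
      intro v
      have hcf := congrFun ((t.centerMass_eq_of_sum_1 z hw1).symm.trans hcm) v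
      simpa [Finset.sum_apply, smul_eq_mul] using hcf
    have hedge : ∀ u v, G.Adj u v → z i0 u + z i0 v = 1 := by
      intro u v huv
      have hsum : ∑ i ∈ t, w i * (z i u + z i v) = 1 := by
        simp only [mul_add, Finset.sum_add_distrib, hcm2 u, hcm2 v]
        norm_num
      have hb : ∀ i ∈ t, z i u + z i v ≤ 1 := by
        intro i hi
        obtain ⟨s, hst, hzi⟩ := hz i hi
        rw [hzi]
        by_cases hu : u ∈ s <;> by_cases hv : v ∈ s
        · exact absurd huv (hst (Finset.mem_coe.mpr hu) (Finset.mem_coe.mpr hv) (G.ne_of_adj huv))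
        · simp [hu, hv]
        · simp [hu, hv]
        · simp [hu, hv]
      by_contra hne
      have hlt : z i0 u + z i0 v < 1 := lt_of_le_of_ne (hb i0 hi0t) hne
      have hstrict : ∑ i ∈ t, w i * (z i u + z i v) < ∑ i ∈ t, w i := by
        apply Finset.sum_lt_sum
        · intro i hi
          calc w i * (z i u + z i v) ≤ w i * 1 :=
                mul_le_mul_of_nonneg_left (hb i hi) (hw0 i hi)
            _ = w i := mul_one _
        · exact ⟨i0, hi0t, by nlinarith⟩
      rw [hsum, hw1] at hstrict
      exact lt_irrefl _ hstrict
    refine ⟨SimpleGraph.Coloring.mk (fun v => if v ∈ s0 then (0 : Fin 2) else 1) ?_⟩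
    intro u v huv
    have he := hedge u v huv
    rw [hz0] at he
    by_cases hu : u ∈ s0 <;> by_cases hv : v ∈ s0
    · exfalso; simp only [hu, hv, if_true, if_false] at he; norm_num at he
    · simp only [hu, hv, if_true, if_false]; decide
    · simp only [hu, hv, if_true, if_false]; decide
    · exfalso; simp only [hu, hv, if_true, if_false] at he; norm_num at he
  · -- bipartite → FRAC = STAB
    intro hcol
    obtain ⟨c⟩ := hcol
    apply Set.Subset.antisymm
    · -- FRAC ⊆ hull
      rintro x ⟨hx01, hxe⟩
      set g : V → ℝ := fun v => if c v = 0 then x v else 1 - x v with hg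
      set T : Finset ℝ := insert 0 (insert 1 (Finset.univ.image g)) with hT
      have h0T : (0:ℝ) ∈ T := by simp [hT]
      have h1T : (1:ℝ) ∈ T := by simp [hT]
      have hgT : ∀ v, g v ∈ T := by
        intro v
        simp only [hT, mem_insert, Finset.mem_image]
        exact Or.inr (Or.inr ⟨v, Finset.mem_univ v, rfl⟩)
      have hpos : ∀ s ∈ T, (0:ℝ) ≤ s := by
        intro s hs
        simp only [hT, mem_insert, Finset.mem_image] at hs
        rcases hs with rfl | rfl | ⟨v, _, rfl⟩
        · exact le_refl _
        · norm_num
        · simp only [hg]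
          by_cases hc0 : c v = 0
          · simpa [hc0] using (hx01 v).1
          · simp only [hc0, if_false]
            linarith [(hx01 v).2]
      set S : ℝ → Finset V :=
        fun s => Finset.univ.filter (fun v => if c v = 0 then s < x v else 1 - x v ≤ s) with hS
      set w : ℝ → ℝ := fun s => nxt T s - s with hw
      set F : Finset ℝ := T.filter (fun s => s < 1) with hF
      have hw0 : ∀ s ∈ F, 0 ≤ w s := by
        intro s hs
        rw [hF, mem_filter] at hs
        have := (nxt_spec h1T hs.2).2.1
        simp only [hw]; linarith
      have hw1 : ∑ s ∈ F, w s = 1 := by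
        rw [hF, hw]
        exact tele T h0T hpos h1T
      have hstab : ∀ s, ((↑(S s) : Set V)).Pairwise fun u w => ¬ G.Adj u w := by
        intro s u hu v hv hne hadj
        simp only [Finset.mem_coe, hS, Finset.mem_filter, Finset.mem_univ, true_and] at hu hv
        have hcuv : c u ≠ c v := c.valid hadj
        have hfin2 : ∀ a : Fin 2, a = 0 ∨ a = 1 := by decide
        have hsum := hxe u v hadj
        by_cases hcu : c u = 0
        · have hcv : ¬ (c v = 0) := by rw [hcu] at hcuv; exact fun h => hcuv h.symm
          rw [if_pos hcu] at hu
          rw [if_neg hcv] at hv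
          linarith
        · have hcv : c v = 0 := by
            rcases hfin2 (c v) with h | h
            · exact h
            · rcases hfin2 (c u) with h' | h'
              · exact absurd h' hcu
              · rw [h, h'] at hcuv; exact absurd rfl hcuv
          rw [if_neg hcu] at hu
          rw [if_pos hcv] at hv
          linarith
      have hcoord : ∀ v, ∑ s ∈ F, w s * (if v ∈ S s then (1:ℝ) else 0) = x v := by
        intro v
        have hmemS : ∀ s, v ∈ S s ↔ (if c v = 0 then s < x v else 1 - x v ≤ s) := by
          intro s
          simp only [hS, Finset.mem_filter, Finset.mem_univ, true_and]
        by_cases hcv : c v = 0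
        · have hxvT : x v ∈ T := by
            have := hgT v
            simpa [hg, hcv] using this
          calc ∑ s ∈ F, w s * (if v ∈ S s then (1:ℝ) else 0)
              = ∑ s ∈ F, (if s < x v then w s else 0) := by
                apply Finset.sum_congr rfl
                intro s _
                by_cases hc : s < x v <;> simp [hmemS, hcv, hc]
            _ = ∑ s ∈ F.filter (fun s => s < x v), w s := (Finset.sum_filter _ _).symm
            _ = ∑ s ∈ T.filter (fun s => s < x v), w s := by
                congr 1
                rw [hF, Finset.filter_filter]
                apply Finset.filter_congr
                intro s hsT
                constructor
                · rintro ⟨_, h⟩; exact h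
                · intro h; exact ⟨lt_of_lt_of_le h (hx01 v).2, h⟩
            _ = x v := by rw [hw]; exact tele T h0T hpos hxvT
        · have hxvT : 1 - x v ∈ T := by
            have := hgT v
            simpa [hg, hcv] using this
          have hsplit : ∑ s ∈ F, w s * (if v ∈ S s then (1:ℝ) else 0)
              = ∑ s ∈ F, w s - ∑ s ∈ F.filter (fun s => s < 1 - x v), w s := by
            have e1 : ∑ s ∈ F, w s * (if v ∈ S s then (1:ℝ) else 0)
                = ∑ s ∈ F, (w s - (if s < 1 - x v then w s else 0)) := by
              apply Finset.sum_congr rfl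
              intro s _
              by_cases hc : 1 - x v ≤ s
              · simp [hmemS, hcv, hc, not_lt.mpr hc]
              · simp [hmemS, hcv, hc, not_le.mp hc]
            rw [e1, Finset.sum_sub_distrib]
            congr 1
            exact (Finset.sum_filter _ _).symm
          rw [hsplit, hw1]
          have hfe : F.filter (fun s => s < 1 - x v) = T.filter (fun s => s < 1 - x v) := by
            rw [hF, Finset.filter_filter]
            apply Finset.filter_congr
            intro s hsT
            constructor
            · rintro ⟨_, h⟩; exact h
            · intro h
              refine ⟨lt_of_lt_of_le h ?_, h⟩
              linarith [(hx01 v).1]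
          rw [hfe, hw]
          have := tele T h0T hpos hxvT
          rw [this]; ring
      have hmem : F.centerMass w (fun s => fun v => if v ∈ S s then (1:ℝ) else 0) ∈
          convexHull ℝ {x : V → ℝ | ∃ s : Finset V,
            ((↑s : Set V).Pairwise fun u w => ¬ G.Adj u w) ∧
            x = fun v => if v ∈ s then (1 : ℝ) else 0} :=
        Finset.centerMass_mem_convexHull F hw0
          (by rw [hw1]; norm_num)
          (fun s _ => ⟨S s, hstab s, rfl⟩)
      have hcmx : F.centerMass w (fun s => fun v => if v ∈ S s then (1:ℝ) else 0) = x := by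
        rw [Finset.centerMass_eq_of_sum_1 _ _ hw1]
        funext v
        rw [Finset.sum_apply]
        simp only [Pi.smul_apply, smul_eq_mul]
        exact hcoord v
      rwa [hcmx] at hmem
    · -- hull ⊆ FRAC
      apply convexHull_min
      · rintro y ⟨s, hstab, rfl⟩
        constructor
        · intro v
          by_cases hv : v ∈ s <;> simp [hv]
        · intro u v huv
          by_cases hu : u ∈ s <;> by_cases hv : v ∈ s
          · exact absurd huv (hstab (Finset.mem_coe.mpr hu) (Finset.mem_coe.mpr hv)
              (G.ne_of_adj huv))
          · simp [hu, hv]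
          · simp [hu, hv]
          · simp [hu, hv]
      · rintro y hy z hz a b ha hb hab
        constructor
        · intro v
          have h1 := (hy.1 v).1
          have h2 := (hy.1 v).2
          have h3 := (hz.1 v).1
          have h4 := (hz.1 v).2
          constructor
          · simp only [Pi.add_apply, Pi.smul_apply, smul_eq_mul]
            nlinarith
          · simp only [Pi.add_apply, Pi.smul_apply, smul_eq_mul]
            nlinarith
        · intro u v huv
          have h1 := hy.2 u v huv
          have h2 := hz.2 u v huv
          simp only [Pi.add_apply, Pi.smul_apply, smul_eq_mul]
          nlinarith
end

section
/- Let k ≥ 3 and S ⊆ {4,…,k}. In the graph 𝒜_{k,S}, the degree of vertex 2 equals (k − 1) + |S|, and for each i ∈ {4,…,k} the degree of the wing vertex i₂ equals k − i + 2 if i ∉ S and k − i + 3 if i ∈ S. -/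
open SimpleGraph

/-!
The vertex type is the sum of the triangle `Fin 3` and the stretched part, so each
neighbourhood is counted through its two preimages. Vertex `2` is adjacent to `1` and `3`, to
every wing `i₁`, and to the wings `i₂` with `i ∈ S`; the wing `i₂` is adjacent to `1` (and to
`2` when `i ∈ S`), to its hub `i₀`, and to the wings `j₁` with `i < j`.
-/

theorem Set.ncard_eq_ncard_preimage_inl_add_ncard_preimage_inr {α β : Type*} [Finite α]
    [Finite β] (s : Set (α ⊕ β)) :
    s.ncard = (Sum.inl ⁻¹' s).ncard + (Sum.inr ⁻¹' s).ncard := by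
  have hs : s = Sum.inl '' (Sum.inl ⁻¹' s) ∪ Sum.inr '' (Sum.inr ⁻¹' s) := by
    ext (a | b) <;> simp
  conv_lhs => rw [hs]
  rw [Set.ncard_union_eq, Set.ncard_image_of_injective _ Sum.inl_injective,
    Set.ncard_image_of_injective _ Sum.inr_injective]
  exact Set.disjoint_left.2 (by rintro _ ⟨a, -, rfl⟩ ⟨b, -, h⟩; cases h)

theorem Fin.ncard_setOf_val_add_mem {n m : ℕ} {S : Finset ℕ} (hS : S ⊆ Finset.Ico m (m + n)) :
    {j : Fin n | (j : ℕ) + m ∈ S}.ncard = S.card := by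
  have himage : (fun j : Fin n => (j : ℕ) + m) '' {j | (j : ℕ) + m ∈ S} = S := by
    ext i
    refine ⟨fun ⟨j, hj, hji⟩ => hji ▸ hj, fun hi => ?_⟩
    have hmi := Finset.mem_Ico.1 (hS hi)
    have hcancel : i - m + m = i := Nat.sub_add_cancel hmi.1
    exact ⟨⟨i - m, by omega⟩, hcancel.symm ▸ hi, hcancel⟩
  rw [← Set.ncard_coe_finset, ← himage,
    Set.ncard_image_of_injective _ fun a b h => Fin.ext (Nat.add_right_cancel h)]

namespace AGraph

variable {k : ℕ} {S : Finset ℕ}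

theorem preimage_inl_neighborSet_inl_one :
    Sum.inl ⁻¹' (AGraph k S).neighborSet (.inl 1) = {0, 2} := by
  ext a
  simp only [AGraph, ARel, Set.mem_preimage, mem_neighborSet, fromRel_adj]
  grind

theorem preimage_inr_neighborSet_inl_one :
    Sum.inr ⁻¹' (AGraph k S).neighborSet (.inl 1) =
      Set.univ ×ˢ {1} ∪ {j : Fin (k - 3) | (j : ℕ) + 4 ∈ S} ×ˢ {2} := by
  ext ⟨j, t⟩
  simp only [AGraph, ARel, Set.mem_preimage, mem_neighborSet, fromRel_adj]
  grind

theorem preimage_inl_neighborSet_wing (j : Fin (k - 3)) :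
    Sum.inl ⁻¹' (AGraph k S).neighborSet (.inr (j, 2)) =
      if (j : ℕ) + 4 ∈ S then {0, 1} else {0} := by
  ext a
  simp only [AGraph, ARel, Set.mem_preimage, mem_neighborSet, fromRel_adj]
  grind

theorem preimage_inr_neighborSet_wing (j : Fin (k - 3)) :
    Sum.inr ⁻¹' (AGraph k S).neighborSet (.inr (j, 2)) =
      insert (j, 0) (Set.Ioi j ×ˢ {1}) := by
  ext ⟨j', t⟩
  simp only [AGraph, ARel, Set.mem_preimage, mem_neighborSet, fromRel_adj]
  grind

theorem ncard_neighborSet_inl_one (hk : 3 ≤ k) (hS : S ⊆ Finset.Icc 4 k) :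
    ((AGraph k S).neighborSet (.inl 1)).ncard = (k - 1) + S.card := by
  have hS' : S ⊆ Finset.Ico 4 (4 + (k - 3)) := hS.trans fun i hi => by
    simp only [Finset.mem_Icc, Finset.mem_Ico] at hi ⊢
    omega
  have hdisj :
      Disjoint (Set.univ ×ˢ {1}) ({j : Fin (k - 3) | (j : ℕ) + 4 ∈ S} ×ˢ {(2 : Fin 3)}) :=
    Set.disjoint_prod.2 (.inr (Set.disjoint_singleton.2 (by decide)))
  rw [Set.ncard_eq_ncard_preimage_inl_add_ncard_preimage_inr, preimage_inl_neighborSet_inl_one,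
    preimage_inr_neighborSet_inl_one, Set.ncard_pair (by decide), Set.ncard_union_eq hdisj,
    Set.ncard_prod, Set.ncard_prod, Set.ncard_univ, Nat.card_fin, Set.ncard_singleton,
    Set.ncard_singleton, Fin.ncard_setOf_val_add_mem hS']
  omega

theorem ncard_neighborSet_wing (j : Fin (k - 3)) :
    ((AGraph k S).neighborSet (.inr (j, 2))).ncard =
      k - ((j : ℕ) + 4) + if (j : ℕ) + 4 ∈ S then 3 else 2 := by
  have hIoi : (Set.Ioi j).ncard = k - 3 - 1 - j := by
    rw [← Finset.coe_Ioi, Set.ncard_coe_finset, Fin.card_Ioi]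
  rw [Set.ncard_eq_ncard_preimage_inl_add_ncard_preimage_inr, preimage_inl_neighborSet_wing,
    preimage_inr_neighborSet_wing, Set.ncard_insert_of_notMem (by simp), Set.ncard_prod,
    Set.ncard_singleton, hIoi]
  have := j.isLt
  split_ifs
  · rw [Set.ncard_pair (by decide)]; omega
  · rw [Set.ncard_singleton]; omega

end AGraph

/-- In `𝒜_{k,S}` the vertex `2` has degree `(k - 1) + |S|`, and for `4 ≤ i ≤ k` the wing
vertex `i₂` has degree `k - i + 3` if `i ∈ S` and `k - i + 2` otherwise. -/
theorem AGraph_degrees (k : ℕ) (hk : 3 ≤ k) (S : Finset ℕ) (hS : S ⊆ Finset.Icc 4 k) :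
    ((AGraph k S).neighborSet (Sum.inl 1)).ncard = (k - 1) + S.card ∧
    ∀ (i : ℕ) (h4 : 4 ≤ i) (hik : i ≤ k),
      ((AGraph k S).neighborSet
          (Sum.inr (⟨i - 4, by omega⟩, 2))).ncard =
        if i ∈ S then k - i + 3 else k - i + 2 := by
  refine ⟨AGraph.ncard_neighborSet_inl_one hk hS, fun i h4 hik => ?_⟩
  rw [AGraph.ncard_neighborSet_wing, Fin.val_mk, Nat.sub_add_cancel h4]
  split_ifs <;> rfl
end
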